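/- arXiv:math/0609838 — 3 statements merged into one kernel-verified Lean document; each statement's English description precedes it below -/
import Mathlib

section
/- Let m ≥ 2 and n ≥ 1, let A : ℝⁿ → Matrix (Fin m) (Fin m) ℝ be a map (with each entry differentiable at p ∈ ℝⁿ) such that A(p) is symmetric, det(A(p)) = 0, and the Fréchet derivative at p of the map x ↦ det(A(x)) is nonzero. Then the kernel of A(p), viewed as a linear endomorphism of ℝᵐ, has dimension exactly 1 (equivalently, A(p) has rank m − 1). -/
/-!
By multilinearity of the determinant in the rows, the differential of `x ↦ det (A x)` at `p`
sends `v` to `∑ i, det (A p with row i replaced by dAᵢ(v))`. Replacing one row raises the rank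
by at most one, so if `rank (A p) ≤ m - 2` every summand is the determinant of a singular
matrix and the differential vanishes. Hence `rank (A p) ≥ m - 1`, while `det (A p) = 0` gives a
nonzero kernel; rank–nullity pins both down.
-/

open Module

namespace Matrix

section Rank

variable {m n K : Type*} [Fintype m] [Fintype n] [DecidableEq m] [Field K]

theorem rank_updateRow_le (A : Matrix m n K) (i : m) (w : n → K) :
    (A.updateRow i w).rank ≤ A.rank + 1 := by
  have hspan : Submodule.span K (Set.range (A.updateRow i w).row) ≤
      Submodule.span K (Set.range A.row) ⊔ K ∙ w := by
    rw [Submodule.span_le]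
    rintro _ ⟨j, rfl⟩
    rcases eq_or_ne j i with rfl | hj
    · exact Submodule.mem_sup_right (by simp [row])
    · exact Submodule.mem_sup_left (Submodule.subset_span ⟨j, by simp [row, hj]⟩)
  rw [rank_eq_finrank_span_row, rank_eq_finrank_span_row]
  calc finrank K (Submodule.span K (Set.range (A.updateRow i w).row))
      ≤ finrank K ↥(Submodule.span K (Set.range A.row) ⊔ K ∙ w) := Submodule.finrank_mono hspan
    _ ≤ finrank K (Submodule.span K (Set.range A.row)) + finrank K (K ∙ w) :=
      Submodule.finrank_add_le_finrank_add_finrank _ _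
    _ ≤ finrank K (Submodule.span K (Set.range A.row)) + 1 := by
      gcongr; exact (finrank_span_le_card {w}).trans (by simp)

theorem det_updateRow_eq_zero_of_rank_add_one_lt {A : Matrix m m K}
    (h : A.rank + 1 < Fintype.card m) (i : m) (w : m → K) : (A.updateRow i w).det = 0 := by
  by_contra hdet
  have := rank_of_det_ne_zero hdet
  have := A.rank_updateRow_le i w
  omega

theorem finrank_ker_toLin'_add_rank (A : Matrix m m K) :
    finrank K (LinearMap.ker (toLin' A)) + A.rank = Fintype.card m := by
  rw [add_comm, ← finrank_fintype_fun_eq_card K]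
  exact LinearMap.finrank_range_add_finrank_ker (toLin' A)

theorem finrank_ker_toLin'_pos_of_det_eq_zero {A : Matrix m m K} (h : A.det = 0) :
    0 < finrank K (LinearMap.ker (toLin' A)) := by
  obtain ⟨v, hv, hAv⟩ := exists_mulVec_eq_zero_iff.2 h
  exact finrank_pos_iff_exists_ne_zero.2 ⟨⟨v, by simpa using hAv⟩, by simpa using hv⟩

end Rank

section Calculus

variable {ι 𝕜 E : Type*} [Fintype ι] [DecidableEq ι] [NontriviallyNormedField 𝕜]
  [NormedAddCommGroup E] [NormedSpace 𝕜 E]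

variable (ι 𝕜) in
noncomputable def detRowContinuousMultilinear :
    ContinuousMultilinearMap 𝕜 (fun _ : ι => ι → 𝕜) 𝕜 where
  toMultilinearMap := (detRowAlternating : (ι → 𝕜) [⋀^ι]→ₗ[𝕜] 𝕜).toMultilinearMap
  cont := continuous_id.matrix_det

theorem detRowContinuousMultilinear_toContinuousLinearMap_apply (A : Matrix ι ι 𝕜) (i : ι)
    (w : ι → 𝕜) :
    (detRowContinuousMultilinear ι 𝕜).toContinuousLinearMap A i w = (A.updateRow i w).det :=
  rfl

theorem hasFDerivAt_det {A : E → Matrix ι ι 𝕜} {A' : ι → E →L[𝕜] ι → 𝕜} {x : E}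
    (hA : ∀ i, HasFDerivAt (fun y => A y i) (A' i) x) :
    HasFDerivAt (fun y => (A y).det)
      (∑ i, ((detRowContinuousMultilinear ι 𝕜).toContinuousLinearMap (A x) i).comp (A' i)) x :=
  HasFDerivAt.multilinear_comp (detRowContinuousMultilinear ι 𝕜) hA

theorem fderiv_det_eq_zero_of_rank_add_one_lt {A : E → Matrix ι ι 𝕜} {x : E}
    (hA : ∀ i j, DifferentiableAt 𝕜 (fun y => A y i j) x)
    (hrank : (A x).rank + 1 < Fintype.card ι) :
    fderiv 𝕜 (fun y => (A y).det) x = 0 := by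
  have hrow (i : ι) : HasFDerivAt (fun y => A y i) (fderiv 𝕜 (fun y => A y i) x) x :=
    (differentiableAt_pi.2 (hA i)).hasFDerivAt
  ext v
  simp [(hasFDerivAt_det hrow).fderiv, detRowContinuousMultilinear_toContinuousLinearMap_apply,
    det_updateRow_eq_zero_of_rank_add_one_lt hrank]

end Calculus

end Matrix

theorem radical_one_dimensional_of_transverse_general
    (m n : ℕ)
    (A : (Fin n → ℝ) → Matrix (Fin m) (Fin m) ℝ) (p : Fin n → ℝ)
    (hdiff : ∀ i j : Fin m, DifferentiableAt ℝ (fun x => A x i j) p)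
    (hdet : (A p).det = 0)
    (hd : fderiv ℝ (fun x => (A x).det) p ≠ 0) :
    Module.finrank ℝ (LinearMap.ker (Matrix.toLin' (A p))) = 1 ∧
      (A p).rank = m - 1 := by
  have hrank : m - 1 ≤ (A p).rank := by
    by_contra! hlt
    exact hd (Matrix.fderiv_det_eq_zero_of_rank_add_one_lt hdiff (by rw [Fintype.card_fin]; omega))
  have hker := Matrix.finrank_ker_toLin'_pos_of_det_eq_zero hdet
  have hsum := (A p).finrank_ker_toLin'_add_rank
  rw [Fintype.card_fin] at hsum
  omega

/-- Coordinate expression of the fact that a transverse type-changing symmetric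
(0,2)-tensor has a one-dimensional radical at every degenerate point: if `A p` is a
symmetric real `m × m` matrix with `det (A p) = 0` and the differential of
`x ↦ det (A x)` at `p` is nonzero, then `ker (A p)` is one-dimensional
(equivalently, `A p` has rank `m - 1`). -/
theorem radical_one_dimensional_of_transverse
    (m n : ℕ) (hm : 2 ≤ m) (hn : 1 ≤ n)
    (A : (Fin n → ℝ) → Matrix (Fin m) (Fin m) ℝ) (p : Fin n → ℝ)
    (hdiff : ∀ i j : Fin m, DifferentiableAt ℝ (fun x => A x i j) p)
    (hsymm : (A p).IsSymm)
    (hdet : (A p).det = 0)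
    (hd : fderiv ℝ (fun x => (A x).det) p ≠ 0) :
    Module.finrank ℝ (LinearMap.ker (Matrix.toLin' (A p))) = 1 ∧
      (A p).rank = m - 1 :=
  radical_one_dimensional_of_transverse_general m n A p hdiff hdet hd
end

section
/- Let m ≥ 2 and n ≥ 1, and let A, B, C : ℝⁿ → Matrix (Fin m) (Fin m) ℝ be maps whose entries are differentiable at p ∈ ℝⁿ, such that C(p) is invertible, det(B(p)) = 0, and A(x) = (C(x))ᵀ · B(x) · C(x) for all x. Then the Fréchet derivative at p of x ↦ det(A(x)) is nonzero if and only if the Fréchet derivative at p of x ↦ det(B(x)) is nonzero. -/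
open Matrix

/-!
Since `det (Cᵀ B C) = (det C)² det B`, the function `x ↦ det (A x)` is `det B` times a factor
that does not vanish at `p`. Because `det B` vanishes at `p`, the product rule kills the term
involving the derivative of that factor, so the two differentials at `p` differ by the nonzero
scalar `(det C(p))²`.
-/

theorem Matrix.det_transpose_mul_mul_self {ι R : Type*} [Fintype ι] [DecidableEq ι] [CommRing R]
    (B C : Matrix ι ι R) : (Cᵀ * B * C).det = C.det ^ 2 * B.det := by
  rw [det_mul, det_mul, det_transpose]
  ring

section Differentiability

variable {𝕜 E : Type*} [NontriviallyNormedField 𝕜] [NormedAddCommGroup E] [NormedSpace 𝕜 E]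

theorem DifferentiableAt.matrix_det {ι 𝔸 : Type*} [Fintype ι] [DecidableEq ι]
    [NormedCommRing 𝔸] [NormedAlgebra 𝕜 𝔸] {M : E → Matrix ι ι 𝔸} {p : E}
    (hM : ∀ i j, DifferentiableAt 𝕜 (fun x => M x i j) p) :
    DifferentiableAt 𝕜 (fun x => (M x).det) p := by
  simp only [det_apply']
  fun_prop

theorem fderiv_mul_of_apply_eq_zero {𝔸 : Type*} [NormedCommRing 𝔸] [NormedAlgebra 𝕜 𝔸]
    {c g : E → 𝔸} {p : E} (hc : DifferentiableAt 𝕜 c p)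
    (hg : DifferentiableAt 𝕜 g p) (hgp : g p = 0) :
    fderiv 𝕜 (fun x => c x * g x) p = c p • fderiv 𝕜 g p := by
  ext v
  simp [fderiv_fun_mul hc hg, hgp]

end Differentiability

theorem transversality_coordinate_independent_general
    (m n : ℕ)
    (A B C : (Fin n → ℝ) → Matrix (Fin m) (Fin m) ℝ) (p : Fin n → ℝ)
    (hB : ∀ i j : Fin m, DifferentiableAt ℝ (fun x => B x i j) p)
    (hC : ∀ i j : Fin m, DifferentiableAt ℝ (fun x => C x i j) p)
    (hCinv : IsUnit (C p))
    (hdetB : (B p).det = 0)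
    (hABC : ∀ x, A x = (C x)ᵀ * B x * C x) :
    fderiv ℝ (fun x => (A x).det) p ≠ 0 ↔ fderiv ℝ (fun x => (B x).det) p ≠ 0 := by
  have hdetA : (fun x => (A x).det) = fun x => (C x).det ^ 2 * (B x).det :=
    funext fun x => by rw [hABC x, det_transpose_mul_mul_self]
  have hdetC : (C p).det ^ 2 ≠ 0 :=
    pow_ne_zero 2 ((isUnit_iff_isUnit_det _).mp hCinv).ne_zero
  rw [hdetA, fderiv_mul_of_apply_eq_zero ((DifferentiableAt.matrix_det hC).fun_pow 2)
    (DifferentiableAt.matrix_det hB) hdetB, smul_ne_zero_iff_right hdetC]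

/-- Coordinate-independence of the transversality condition `d_p(det(g_ab)) ≠ 0`:
if `A x = (C x)ᵀ * B x * C x` with `C p` invertible and `det (B p) = 0`, and all
entries are differentiable at `p`, then the differential at `p` of `x ↦ det (A x)`
is nonzero iff the differential at `p` of `x ↦ det (B x)` is. -/
theorem transversality_coordinate_independent
    (m n : ℕ) (hm : 2 ≤ m) (hn : 1 ≤ n)
    (A B C : (Fin n → ℝ) → Matrix (Fin m) (Fin m) ℝ) (p : Fin n → ℝ)
    (hA : ∀ i j : Fin m, DifferentiableAt ℝ (fun x => A x i j) p)
    (hB : ∀ i j : Fin m, DifferentiableAt ℝ (fun x => B x i j) p)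
    (hC : ∀ i j : Fin m, DifferentiableAt ℝ (fun x => C x i j) p)
    (hCinv : IsUnit (C p))
    (hdetB : (B p).det = 0)
    (hABC : ∀ x, A x = (C x)ᵀ * B x * C x) :
    fderiv ℝ (fun x => (A x).det) p ≠ 0 ↔ fderiv ℝ (fun x => (B x).det) p ≠ 0 :=
  transversality_coordinate_independent_general m n A B C p hB hC hCinv hdetB hABC
end

section
/- Let m ≥ 2 and let A : ℝ → Matrix (Fin m) (Fin m) ℝ be a map with continuously differentiable entries such that A(t) is symmetric for every t, det(A(0)) = 0, and the derivative at 0 of the function t ↦ det(A(t)) is nonzero. Then there exists ε > 0 such that for all t with 0 < t < ε the matrices A(t) and A(−t) are invertible and the number of negative eigenvalues of A(t) (counted with multiplicity) differs from the number of negative eigenvalues of A(−t) by exactly one. -/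
/-!
Put `f t = det (A t)`. Since `f 0 = 0` and `f' 0 ≠ 0`, the values `f t` and `f (-t)` have
opposite signs for small `t > 0`; as `det = ∏ eigenvalues`, the numbers of negative eigenvalues
of `A t` and `A (-t)` then have different parities. On the other hand `f' 0 ≠ 0` forces
`ker (A 0)` to be at most a line: in an eigenbasis of `A 0`, two vanishing rows would make `f`
vanish to second order. The subspaces on which the quadratic form of `A 0` is negative, resp.
positive, definite stay so for `A t` with `t` small, so if `A 0` has `k` negative eigenvalues,
`A t` has at least `k` negative and at least `m - k - 1` positive ones. Its index is therefore
`k` or `k + 1`, and by parity the two sides take different values.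
-/

open Matrix Filter Topology
open scoped RealInnerProductSpace

theorem card_lt_add_card_gt_add_card_eq {ι α : Type*} [Fintype ι] [LinearOrder α] (g : ι → α)
    (a : α) :
    Fintype.card {i // g i < a} + Fintype.card {i // a < g i} + Fintype.card {i // g i = a} =
      Fintype.card ι := by
  classical
  simp only [Fintype.card_subtype]
  rw [← Finset.card_union_of_disjoint, ← Finset.card_union_of_disjoint, ← Finset.filter_or,
    ← Finset.filter_or, Finset.filter_true_of_mem, Finset.card_univ]
  · intro i _
    rcases lt_trichotomy (g i) a with h | h | h <;> simp [h]
  · simp only [Finset.disjoint_left, Finset.mem_union, Finset.mem_filter]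
    rintro i (⟨_, h⟩ | ⟨_, h⟩) ⟨_, rfl⟩ <;> exact lt_irrefl _ h
  · exact Finset.disjoint_filter.2 fun i _ h => (lt_asymm h).elim

theorem neg_one_pow_card_neg_mul_prod_pos {ι : Type*} [Fintype ι] (g : ι → ℝ)
    (hg : ∀ i, g i ≠ 0) : 0 < (-1) ^ Fintype.card {i // g i < 0} * ∏ i, g i := by
  classical
  have hsign : ∀ i, (if g i < 0 then (-1 : ℝ) else 1) * g i = |g i| := fun i => by
    split_ifs with h
    · simp [abs_of_neg h]
    · simp [abs_of_nonneg (not_lt.1 h)]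
  have hpow : (-1 : ℝ) ^ Fintype.card {i // g i < 0} = ∏ i, if g i < 0 then (-1 : ℝ) else 1 := by
    rw [Finset.prod_ite, Finset.prod_const, Finset.prod_const_one, mul_one, Fintype.card_subtype]
  rw [hpow, ← Finset.prod_mul_distrib]
  simp only [hsign]
  exact Finset.prod_pos fun i _ => abs_pos.2 (hg i)

theorem eventually_mul_neg_of_hasDerivAt {f : ℝ → ℝ} {d : ℝ} (hf : HasDerivAt f d 0)
    (hf0 : f 0 = 0) (hd : d ≠ 0) : ∀ᶠ t in 𝓝[>] 0, f t * f (-t) < 0 := by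
  have hslope : ∀ᶠ t in 𝓝[≠] 0, 0 < f t / t * d := by
    have := ((hasDerivAt_iff_tendsto_slope.1 hf).mul_const d).eventually
      (lt_mem_nhds (mul_self_pos.2 hd))
    simpa [slope_def_field, hf0] using this
  have hneg : Tendsto Neg.neg (𝓝[>] (0 : ℝ)) (𝓝[<] 0) := by
    simpa using tendsto_neg_nhdsGT_neg (a := (0 : ℝ))
  filter_upwards [nhdsWithin_mono _ (fun t (ht : 0 < t) => ht.ne') hslope,
    hneg.eventually (nhdsWithin_mono _ (fun t (ht : t < 0) => ht.ne) hslope),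
    self_mem_nhdsWithin] with t hpos hneg (ht : 0 < t)
  have key : f t / t * d * (f (-t) / -t * d) = -(f t * f (-t)) * (d / t) ^ 2 := by
    field_simp
  have := mul_pos hpos hneg
  rw [key] at this
  exact neg_pos.1 (pos_of_mul_pos_left this (sq_nonneg _))

theorem Matrix.hasDerivAt_det_of_two_zero_rows {n 𝕜 : Type*} [Fintype n] [DecidableEq n]
    [NontriviallyNormedField 𝕜] {B : 𝕜 → Matrix n n 𝕜} {x : 𝕜}
    (hB : ∀ i j, DifferentiableAt 𝕜 (fun t => B t i j) x) {r s : n} (hrs : r ≠ s)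
    (hr : ∀ j, B x r j = 0) (hs : ∀ j, B x s j = 0) :
    HasDerivAt (fun t => (B t).det) 0 x := by
  simp_rw [det_apply']
  have hterm : ∀ σ : Equiv.Perm n,
      HasDerivAt (fun t => ((Equiv.Perm.sign σ : ℤ) : 𝕜) * ∏ i, B t (σ i) i) 0 x := by
    intro σ
    refine ((HasDerivAt.fun_finsetProd fun i _ => (hB (σ i) i).hasDerivAt).const_mul
      ((Equiv.Perm.sign σ : ℤ) : 𝕜)).congr_deriv ?_
    rw [Finset.sum_eq_zero, mul_zero]
    intro i _
    -- after differentiating one factor, a factor from row `r` or from row `s` is left over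
    obtain ⟨j, hji, hj⟩ : ∃ j, j ≠ i ∧ ∀ k, B x (σ j) k = 0 := by
      by_cases h : σ.symm r = i
      · exact ⟨σ.symm s, fun h' => hrs (σ.symm.injective (h.trans h'.symm)), by simpa using hs⟩
      · exact ⟨σ.symm r, h, by simpa using hr⟩
    rw [Finset.prod_eq_zero (f := fun k => B x (σ k) k)
      (Finset.mem_erase.2 ⟨hji, Finset.mem_univ j⟩) (hj j), zero_smul]
  simpa using HasDerivAt.fun_sum fun σ _ => hterm σ

section WeightedSumOfSquares

variable {ι E : Type*} [Fintype ι] [NormedAddCommGroup E] [InnerProductSpace ℝ E]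

theorem OrthonormalBasis.finrank_le_card_pos_of_sum_pos (b : OrthonormalBasis ι ℝ E)
    (μ : ι → ℝ) (W : Submodule ℝ E) (hW : ∀ x ∈ W, x ≠ 0 → 0 < ∑ i, μ i * b.repr x i ^ 2) :
    Module.finrank ℝ W ≤ Fintype.card {i // 0 < μ i} := by
  let φ : W →ₗ[ℝ] {i // 0 < μ i} → ℝ := LinearMap.pi fun i => (innerₛₗ ℝ (b i)).comp W.subtype
  have hφ : Function.Injective φ := by
    rw [← LinearMap.ker_eq_bot, LinearMap.ker_eq_bot']
    intro x hx
    by_contra hx0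
    have hvanish : ∀ i, 0 < μ i → b.repr x i = 0 := fun i hi => by
      rw [b.repr_apply_apply]
      exact congrFun hx ⟨i, hi⟩
    refine (hW x x.2 (by simpa using hx0)).not_ge (Finset.sum_nonpos fun i _ => ?_)
    by_cases hi : 0 < μ i
    · simp [hvanish i hi]
    · exact mul_nonpos_of_nonpos_of_nonneg (not_lt.1 hi) (sq_nonneg _)
  simpa using LinearMap.finrank_le_finrank_of_injective hφ

theorem OrthonormalBasis.exists_finrank_eq_card_pos_of_sum_pos (b : OrthonormalBasis ι ℝ E)
    (μ : ι → ℝ) :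
    ∃ W : Submodule ℝ E, Module.finrank ℝ W = Fintype.card {i // 0 < μ i} ∧
      ∀ x ∈ W, x ≠ 0 → 0 < ∑ i, μ i * b.repr x i ^ 2 := by
  refine ⟨Submodule.span ℝ (Set.range fun i : {i // 0 < μ i} => b i),
    finrank_span_eq_card (b.orthonormal.linearIndependent.comp _ Subtype.val_injective),
    fun x hx hx0 => ?_⟩
  have hvanish : ∀ i, ¬ 0 < μ i → b.repr x i = 0 := fun i hi => by
    rw [b.repr_apply_apply, ← Submodule.mem_orthogonal_singleton_iff_inner_right]
    refine Submodule.span_le.2 ?_ hx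
    rintro _ ⟨j, rfl⟩
    rw [SetLike.mem_coe, Submodule.mem_orthogonal_singleton_iff_inner_right]
    exact b.orthonormal.2 fun h => hi (h ▸ j.2)
  obtain ⟨i, hi⟩ : ∃ i, b.repr x i ≠ 0 := by
    by_contra! h
    exact hx0 (b.repr.map_eq_zero_iff.1 (by ext i; exact h i))
  have hμi : 0 < μ i := by
    by_contra h
    exact hi (hvanish i h)
  refine Finset.sum_pos' (fun j _ => ?_) ⟨i, Finset.mem_univ i, by positivity⟩
  by_cases hj : 0 < μ j
  · positivity
  · simp [hvanish j hj]

theorem eventually_forall_inner_pos {X : Type*} [TopologicalSpace X] [FiniteDimensional ℝ E]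
    {T : X → E →L[ℝ] E} (hT : Continuous T) {x₀ : X} {W : Submodule ℝ E}
    (hW : ∀ y ∈ W, y ≠ 0 → 0 < ⟪y, T x₀ y⟫) :
    ∀ᶠ x in 𝓝 x₀, ∀ y ∈ W, y ≠ 0 → 0 < ⟪y, T x y⟫ := by
  have hK : IsCompact ((W : Set E) ∩ Metric.sphere 0 1) :=
    (isCompact_sphere 0 1).inter_left W.closed_of_finiteDimensional
  have hQ : Continuous fun z : X × E => ⟪z.2, T z.1 z.2⟫ := by fun_prop
  have hsphere := hK.eventually_forall_of_forall_eventually (x₀ := x₀)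
    (P := fun x y => 0 < ⟪y, T x y⟫) fun y hy =>
    (hQ.tendsto (x₀, y)).eventually (lt_mem_nhds (hW y hy.1 (ne_zero_of_mem_unit_sphere ⟨y, hy.2⟩)))
  filter_upwards [hsphere] with x hx y hyW hy0
  have hunit := hx (‖y‖⁻¹ • y) ⟨W.smul_mem _ hyW, by simp [norm_smul, hy0]⟩
  rw [map_smul, real_inner_smul_left, real_inner_smul_right] at hunit
  have hinv : 0 ≤ ‖y‖⁻¹ := by positivity
  exact pos_of_mul_pos_right (pos_of_mul_pos_right hunit hinv) hinv

theorem eventually_card_pos_le {X : Type*} [TopologicalSpace X] {T : X → E →L[ℝ] E}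
    (hT : Continuous T) (b : X → OrthonormalBasis ι ℝ E) (μ : X → ι → ℝ)
    (hTμ : ∀ x y, ⟪y, T x y⟫ = ∑ i, μ x i * (b x).repr y i ^ 2) (x₀ : X) :
    ∀ᶠ x in 𝓝 x₀, Fintype.card {i // 0 < μ x₀ i} ≤ Fintype.card {i // 0 < μ x i} := by
  have := (b x₀).toBasis.finiteDimensional_of_finite
  obtain ⟨W, hWdim, hWpos⟩ := (b x₀).exists_finrank_eq_card_pos_of_sum_pos (μ x₀)
  filter_upwards [eventually_forall_inner_pos hT (x₀ := x₀) (W := W)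
    fun y hy hy0 => hTμ x₀ y ▸ hWpos y hy hy0] with x hx
  rw [← hWdim]
  exact (b x).finrank_le_card_pos_of_sum_pos (μ x) W fun y hy hy0 => hTμ x y ▸ hx y hy hy0

end WeightedSumOfSquares

namespace Matrix.IsHermitian

variable {n : Type*} [Fintype n] [DecidableEq n]

theorem inner_toEuclideanLin_self {M : Matrix n n ℝ} (hM : M.IsHermitian)
    (x : EuclideanSpace ℝ n) :
    ⟪x, toEuclideanLin M x⟫ = ∑ i, hM.eigenvalues i * hM.eigenvectorBasis.repr x i ^ 2 := by
  set b := hM.eigenvectorBasis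
  have hb : ∀ i, toEuclideanLin M (b i) = hM.eigenvalues i • b i := fun i => by
    ext j
    simpa using congrFun (hM.mulVec_eigenvectorBasis i) j
  rw [← b.sum_inner_mul_inner x]
  refine Finset.sum_congr rfl fun i _ => ?_
  rw [b.repr_apply_apply, real_inner_comm x, ← isSymmetric_toEuclideanLin_iff.mpr hM, hb,
    real_inner_smul_left, real_inner_comm x]
  ring

theorem neg_one_pow_card_neg_eigenvalues_mul_det_pos {M : Matrix n n ℝ} (hM : M.IsHermitian)
    (hdet : M.det ≠ 0) : 0 < (-1) ^ Fintype.card {i // hM.eigenvalues i < 0} * M.det := by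
  rw [hM.det_eq_prod_eigenvalues] at hdet ⊢
  exact neg_one_pow_card_neg_mul_prod_pos _ fun i hi =>
    hdet (Finset.prod_eq_zero (Finset.mem_univ i) (by simpa using hi))

theorem card_neg_eigenvalues_ne_of_det_mul_det_neg {M N : Matrix n n ℝ} (hM : M.IsHermitian)
    (hN : N.IsHermitian) (h : M.det * N.det < 0) :
    Fintype.card {i // hM.eigenvalues i < 0} ≠ Fintype.card {i // hN.eigenvalues i < 0} := by
  intro hcard
  have := mul_pos (hM.neg_one_pow_card_neg_eigenvalues_mul_det_pos (left_ne_zero_of_mul h.ne))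
    (hN.neg_one_pow_card_neg_eigenvalues_mul_det_pos (right_ne_zero_of_mul h.ne))
  rw [hcard, mul_mul_mul_comm, ← pow_add, ← two_mul, pow_mul, neg_one_sq, one_pow, one_mul] at this
  exact this.not_gt h

theorem eventually_card_neg_eigenvalues_mem {X : Type*} [TopologicalSpace X]
    {A : X → Matrix n n ℝ} (hA : Continuous A) (hH : ∀ x, (A x).IsHermitian) (x₀ : X) :
    ∀ᶠ x in 𝓝 x₀,
      Fintype.card {i // (hH x₀).eigenvalues i < 0} ≤ Fintype.card {i // (hH x).eigenvalues i < 0} ∧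
      Fintype.card {i // (hH x).eigenvalues i < 0} ≤
        Fintype.card {i // (hH x₀).eigenvalues i < 0} +
          Fintype.card {i // (hH x₀).eigenvalues i = 0} := by
  have hT : Continuous fun x => toEuclideanCLM (𝕜 := ℝ) (A x) :=
    (LinearMap.continuous_of_finiteDimensional
      (toEuclideanCLM (n := n) (𝕜 := ℝ)).toAlgEquiv.toLinearMap).comp hA
  have hQ : ∀ x y, ⟪y, toEuclideanCLM (𝕜 := ℝ) (A x) y⟫ =
      ∑ i, (hH x).eigenvalues i * (hH x).eigenvectorBasis.repr y i ^ 2 :=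
    fun x => (hH x).inner_toEuclideanLin_self
  have hpos := eventually_card_pos_le hT _ _ hQ x₀
  have hneg := eventually_card_pos_le hT.neg (fun x => (hH x).eigenvectorBasis)
    (fun x => -(hH x).eigenvalues) (fun x y => by simp [inner_neg_right, hQ]) x₀
  simp only [Pi.neg_apply, neg_pos] at hneg
  filter_upwards [hpos, hneg] with x hpos hneg
  have h₀ := card_lt_add_card_gt_add_card_eq (hH x₀).eigenvalues 0
  have h := card_lt_add_card_gt_add_card_eq (hH x).eigenvalues 0
  omega

theorem card_eigenvalues_eq_zero_le_one {A : ℝ → Matrix n n ℝ} {x : ℝ}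
    (hA : ∀ i j, DifferentiableAt ℝ (fun t => A t i j) x) (hH : (A x).IsHermitian)
    (hd : deriv (fun t => (A t).det) x ≠ 0) :
    Fintype.card {i // hH.eigenvalues i = 0} ≤ 1 := by
  by_contra! h
  obtain ⟨⟨r, hr⟩, ⟨s, hs⟩, hrs⟩ := Fintype.one_lt_card_iff.1 h
  set U : Matrix n n ℝ := (hH.eigenvectorUnitary : Matrix n n ℝ)
  have hUU : U * star U = 1 := Unitary.mul_star_self_of_mem hH.eigenvectorUnitary.2
  have hdet : ∀ t, (star U * A t * U).det = (A t).det := fun t => by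
    rw [det_mul_comm, ← Matrix.mul_assoc, hUU, Matrix.one_mul]
  have hdiag : star U * A x * U = diagonal hH.eigenvalues := by
    simpa [Unitary.conjStarAlgAut_star_apply] using hH.conjStarAlgAut_star_eigenvectorUnitary
  have hD := hasDerivAt_det_of_two_zero_rows (B := fun t => star U * A t * U)
    (fun i j => by simp only [mul_apply]; fun_prop) (fun h => hrs (Subtype.ext h))
    (by simp [hdiag, diagonal_apply, hr]) (by simp [hdiag, diagonal_apply, hs])
  simp only [hdet] at hD
  exact hd hD.deriv

end Matrix.IsHermitian

theorem index_jumps_by_one_across_transverse_degeneracy_general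
    (m : ℕ)
    (A : ℝ → Matrix (Fin m) (Fin m) ℝ)
    (hC1 : ∀ i j : Fin m, ContDiff ℝ 1 fun t => A t i j)
    (hsymm : ∀ t, (A t).IsHermitian)
    (hdet0 : (A 0).det = 0)
    (hd : deriv (fun t => (A t).det) 0 ≠ 0) :
    ∃ ε > (0 : ℝ), ∀ t : ℝ, 0 < t → t < ε →
      IsUnit (A t) ∧ IsUnit (A (-t)) ∧
        (Fintype.card {i : Fin m // (hsymm t).eigenvalues i < 0} =
            Fintype.card {i : Fin m // (hsymm (-t)).eigenvalues i < 0} + 1 ∨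
          Fintype.card {i : Fin m // (hsymm (-t)).eigenvalues i < 0} =
            Fintype.card {i : Fin m // (hsymm t).eigenvalues i < 0} + 1) := by
  have hA : Continuous A := continuous_pi fun i => continuous_pi fun j => (hC1 i j).continuous
  have hker : Fintype.card {i // (hsymm 0).eigenvalues i = 0} ≤ 1 :=
    (hsymm 0).card_eigenvalues_eq_zero_le_one
      (fun i j => (hC1 i j).differentiable one_ne_zero 0) hd
  have hflip : ∀ᶠ t in 𝓝[>] 0, (A t).det * (A (-t)).det < 0 :=
    eventually_mul_neg_of_hasDerivAt (differentiableAt_of_deriv_ne_zero hd).hasDerivAt hdet0 hd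
  have hindex := Matrix.IsHermitian.eventually_card_neg_eigenvalues_mem hA hsymm 0
  have hindex_neg := (continuous_neg.tendsto' (0 : ℝ) 0 neg_zero).eventually hindex
  obtain ⟨ε, hε, hsub⟩ := mem_nhdsGT_iff_exists_Ioo_subset.1
    (hflip.and (nhdsWithin_le_nhds (hindex.and hindex_neg)))
  refine ⟨ε, hε, fun t ht htε => ?_⟩
  obtain ⟨hdet, ⟨hlow, hhigh⟩, hlow', hhigh'⟩ := hsub ⟨ht, htε⟩
  have hne := (hsymm t).card_neg_eigenvalues_ne_of_det_mul_det_neg (hsymm (-t)) hdet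
  exact ⟨(A t).isUnit_iff_isUnit_det.2 (left_ne_zero_of_mul hdet.ne).isUnit,
    (A (-t)).isUnit_iff_isUnit_det.2 (right_ne_zero_of_mul hdet.ne).isUnit, by omega⟩

/-- Matrix form of "the transverse type-changing hypersurface separates two
pseudo-Riemannian regions whose indices differ in one unit": if `A : ℝ → Sym(m,ℝ)`
is a C¹ family of symmetric matrices with `det (A 0) = 0` and `(d/dt) det (A t)`
nonzero at `t = 0`, then for all small `t > 0` the matrices `A t` and `A (-t)` are
invertible and their numbers of negative eigenvalues (with multiplicity) differ by
exactly one.  (Over `ℝ`, `IsHermitian` means precisely that the matrix is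
symmetric.) -/
theorem index_jumps_by_one_across_transverse_degeneracy
    (m : ℕ) (hm : 2 ≤ m)
    (A : ℝ → Matrix (Fin m) (Fin m) ℝ)
    (hC1 : ∀ i j : Fin m, ContDiff ℝ 1 fun t => A t i j)
    (hsymm : ∀ t, (A t).IsHermitian)
    (hdet0 : (A 0).det = 0)
    (hd : deriv (fun t => (A t).det) 0 ≠ 0) :
    ∃ ε > (0 : ℝ), ∀ t : ℝ, 0 < t → t < ε →
      IsUnit (A t) ∧ IsUnit (A (-t)) ∧
        (Fintype.card {i : Fin m // (hsymm t).eigenvalues i < 0} =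
            Fintype.card {i : Fin m // (hsymm (-t)).eigenvalues i < 0} + 1 ∨
          Fintype.card {i : Fin m // (hsymm (-t)).eigenvalues i < 0} =
            Fintype.card {i : Fin m // (hsymm t).eigenvalues i < 0} + 1) :=
  index_jumps_by_one_across_transverse_degeneracy_general m A hC1 hsymm hdet0 hd
end
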